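/- Let n ≥ 2 and let v ∈ ℝⁿ be a unit vector. Suppose u_1, …, u_n ∈ ℝⁿ are unit vectors such that ∑_{j=1}^n a_j u_j = 0 for every a ∈ ℝⁿ with ‖a‖₂ = 1 and ⟨a, v⟩ = 0. Then |v_j| = n^{−1/2} for every j ∈ [n]; that is, v must be a signing scaled by n^{−1/2}. In particular, if v is a unit vector whose coordinates do not all have equal magnitude, then the vector discrepancy of the system of constraints indexed by S^{n−1} ∩ v^⊥ is strictly positive while its spherical discrepancy is zero (witnessed by x = √n·v). -/

import Mathlib

/-!
Put `c = ∑ᵢ vᵢ uᵢ`. If `‖∑ⱼ aⱼ uⱼ‖ ≤ D ‖a‖` for all `a ⊥ v`, testing with `a = eᵢ - vᵢ v`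
(orthogonal to `v`, of norm `√(1 - vᵢ²) ≤ 1`) gives `‖uᵢ - vᵢ c‖ ≤ D`, hence, the `uᵢ` being
unit vectors, `|1 - |vᵢ| ‖c‖| ≤ D` for every `i`.
For `D = 0` all `|vᵢ|` equal `1 / ‖c‖`, and `∑ vᵢ² = 1` forces `‖c‖ = √n`.
For two coordinates with `δ = ||vⱼ| - |vₖ|| > 0` the two estimates give `δ (1 - D) ≤ 2 D`,
i.e. `D ≥ δ / (δ + 2)` whatever the `uᵢ`, so the vector discrepancy is positive.
-/

/-- The Euclidean norm of a vector in ℝ^n. -/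
noncomputable def e2 {n : ℕ} (x : Fin n → ℝ) : ℝ := Real.sqrt (∑ j, x j ^ 2)

open Matrix

lemma div_add_two_le_of_abs_one_sub_mul_le {x y C D : ℝ} (hx : x ≤ 1) (hC : 0 ≤ C)
    (hxD : |1 - x * C| ≤ D) (hyD : |1 - y * C| ≤ D) : |x - y| / (|x - y| + 2) ≤ D := by
  have hdiff : |x - y| * C ≤ 2 * D := by
    calc |x - y| * C = |(1 - y * C) - (1 - x * C)| := by
          rw [← abs_of_nonneg hC, ← abs_mul, abs_of_nonneg hC]; ring_nf
      _ ≤ |1 - y * C| + |1 - x * C| := abs_sub _ _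
      _ ≤ 2 * D := by linarith
  have hCD : 1 - D ≤ C := by
    have := (abs_le.mp hxD).2
    nlinarith
  rw [div_le_iff₀ (by positivity)]
  nlinarith [abs_nonneg (x - y)]

section

variable {n : ℕ} {v : Fin n → ℝ} {u : Matrix (Fin n) (Fin n) ℝ} {D : ℝ}

lemma e2_eq_norm (x : Fin n → ℝ) : e2 x = ‖WithLp.toLp 2 x‖ := by
  simp [EuclideanSpace.norm_eq, e2]

lemma e2_nonneg (x : Fin n → ℝ) : 0 ≤ e2 x := Real.sqrt_nonneg _

lemma e2_smul (c : ℝ) (x : Fin n → ℝ) : e2 (c • x) = |c| * e2 x := by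
  simp only [e2_eq_norm, WithLp.toLp_smul, norm_smul, Real.norm_eq_abs]

lemma abs_e2_sub_e2_le (x y : Fin n → ℝ) : |e2 x - e2 y| ≤ e2 (x - y) := by
  simpa only [e2_eq_norm, WithLp.toLp_sub] using abs_norm_sub_norm_le _ _

lemma e2_sum_le {ι : Type*} (s : Finset ι) (f : ι → Fin n → ℝ) :
    e2 (∑ i ∈ s, f i) ≤ ∑ i ∈ s, e2 (f i) := by
  simpa only [e2_eq_norm, WithLp.toLp_sum] using norm_sum_le _ _

lemma abs_apply_le_e2 (x : Fin n → ℝ) (i : Fin n) : |x i| ≤ e2 x := by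
  simpa [e2_eq_norm] using PiLp.norm_apply_le (WithLp.toLp 2 x) i

lemma sq_e2 (x : Fin n → ℝ) : e2 x ^ 2 = x ⬝ᵥ x := by
  rw [e2, Real.sq_sqrt (Finset.sum_nonneg fun _ _ => sq_nonneg _)]
  simp [dotProduct, sq]

lemma e2_eq_zero {x : Fin n → ℝ} : e2 x = 0 ↔ x = 0 := by
  rw [e2_eq_norm, norm_eq_zero, WithLp.toLp_eq_zero]

lemma e2_single_one (i : Fin n) : e2 (Pi.single i 1) = 1 := by
  refine (sq_eq_sq₀ (e2_nonneg _) zero_le_one).mp ?_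
  rw [sq_e2, single_dotProduct, one_mul, Pi.single_eq_same, one_pow]

lemma e2_vecMul_le_mul_e2 (h : ∀ a, e2 a = 1 → a ⬝ᵥ v = 0 → e2 (a ᵥ* u) ≤ D) :
    ∀ a, a ⬝ᵥ v = 0 → e2 (a ᵥ* u) ≤ D * e2 a := by
  intro a ha
  rcases eq_or_ne a 0 with rfl | ha0
  · simp [e2_eq_norm]
  have hpos : 0 < e2 a := (e2_nonneg a).lt_of_ne' (e2_eq_zero.not.mpr ha0)
  have hunit : e2 ((e2 a)⁻¹ • a) = 1 := by
    rw [e2_smul, abs_inv, abs_of_pos hpos, inv_mul_cancel₀ hpos.ne']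
  have := h _ hunit (by rw [smul_dotProduct, ha, smul_zero])
  rw [smul_vecMul, e2_smul, abs_inv, abs_of_pos hpos, inv_mul_le_iff₀ hpos] at this
  linarith

/-- Test against `a = e_i - v_i v`: it is orthogonal to `v`, has norm at most `1`, and
`a ᵥ* u = u_i - v_i (v ᵥ* u)`. -/
lemma abs_one_sub_abs_mul_e2_vecMul_le (hv : e2 v = 1) (hu : ∀ j, e2 (u j) = 1) (hD : 0 ≤ D)
    (h : ∀ a, a ⬝ᵥ v = 0 → e2 (a ᵥ* u) ≤ D * e2 a) (i : Fin n) :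
    |1 - |v i| * e2 (v ᵥ* u)| ≤ D := by
  have hvv : v ⬝ᵥ v = 1 := by rw [← sq_e2, hv, one_pow]
  set a := Pi.single i 1 - v i • v
  have ha_orth : a ⬝ᵥ v = 0 := by
    simp [a, sub_dotProduct, smul_dotProduct, single_dotProduct, hvv]
  have ha_le : e2 a ≤ 1 := by
    refine (sq_le_one_iff₀ (e2_nonneg a)).mp ?_
    rw [sq_e2]
    simp only [a, sub_dotProduct, dotProduct_sub, smul_dotProduct, dotProduct_smul,
      single_dotProduct, dotProduct_single, hvv, Pi.sub_apply, Pi.smul_apply, Pi.single_eq_same,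
      smul_eq_mul]
    nlinarith [sq_nonneg (v i)]
  have ha_img : a ᵥ* u = u i - v i • (v ᵥ* u) := by
    rw [sub_vecMul, single_one_vecMul, smul_vecMul]
    rfl
  calc |1 - |v i| * e2 (v ᵥ* u)| = |e2 (u i) - e2 (v i • (v ᵥ* u))| := by rw [hu, e2_smul]
    _ ≤ e2 (a ᵥ* u) := ha_img ▸ abs_e2_sub_e2_le _ _
    _ ≤ D * e2 a := h a ha_orth
    _ ≤ D := mul_le_of_le_one_right hD ha_le

lemma e2_vecMul_le_card_mul (hu : ∀ j, e2 (u j) ≤ 1) (a : Fin n → ℝ) :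
    e2 (a ᵥ* u) ≤ n * e2 a := by
  calc e2 (a ᵥ* u) ≤ ∑ j, e2 (a j • u j) := by rw [vecMul_eq_sum]; exact e2_sum_le _ _
    _ ≤ ∑ _j : Fin n, e2 a := Finset.sum_le_sum fun j _ => by
        rw [e2_smul]
        exact (mul_le_of_le_one_right (abs_nonneg _) (hu j)).trans (abs_apply_le_e2 a j)
    _ = n * e2 a := by simp

lemma abs_eq_one_div_sqrt_of_vecMul_eq_zero (hv : e2 v = 1) (hu : ∀ j, e2 (u j) = 1)
    (h : ∀ a, e2 a = 1 → a ⬝ᵥ v = 0 → a ᵥ* u = 0) (j : Fin n) : |v j| = 1 / √n := by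
  set C := e2 (v ᵥ* u)
  have hC : ∀ i, |v i| * C = 1 := fun i => by
    have := abs_one_sub_abs_mul_e2_vecMul_le hv hu le_rfl
      (e2_vecMul_le_mul_e2 fun a ha hav => by rw [h a ha hav, e2_eq_zero.mpr rfl]) i
    rw [abs_nonpos_iff, sub_eq_zero] at this
    exact this.symm
  have hCn : C ^ 2 = n := calc
    C ^ 2 = (v ⬝ᵥ v) * C ^ 2 := by rw [← sq_e2, hv, one_pow, one_mul]
    _ = ∑ i, (|v i| * C) ^ 2 := by
      rw [dotProduct, Finset.sum_mul]
      exact Finset.sum_congr rfl fun i _ => by rw [mul_pow, sq_abs]; ring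
    _ = n := by simp [hC]
  have hCsqrt : C = √n := by rw [← hCn, Real.sqrt_sq (e2_nonneg _)]
  rw [← hCsqrt]
  exact eq_one_div_of_mul_eq_one_left (hC j)

lemma div_add_two_le_iSup_e2_vecMul (hv : e2 v = 1) (hu : ∀ j, e2 (u j) = 1) (j k : Fin n) :
    |(|v j| - |v k|)| / (|(|v j| - |v k|)| + 2) ≤
      ⨆ a : {a : Fin n → ℝ // e2 a = 1 ∧ a ⬝ᵥ v = 0}, e2 (a.1 ᵥ* u) := by
  have hbdd : BddAbove (Set.range fun a : {a : Fin n → ℝ // e2 a = 1 ∧ a ⬝ᵥ v = 0} =>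
      e2 (a.1 ᵥ* u)) := ⟨n, by
    rintro _ ⟨a, rfl⟩
    simpa [a.2.1] using e2_vecMul_le_card_mul (fun j => (hu j).le) a.1⟩
  have hD0 := Real.iSup_nonneg fun a : {a : Fin n → ℝ // e2 a = 1 ∧ a ⬝ᵥ v = 0} =>
    e2_nonneg (a.1 ᵥ* u)
  have hD := abs_one_sub_abs_mul_e2_vecMul_le hv hu hD0
    (e2_vecMul_le_mul_e2 fun a ha hav => le_ciSup hbdd ⟨a, ha, hav⟩)
  exact div_add_two_le_of_abs_one_sub_mul_le ((abs_apply_le_e2 v j).trans hv.le) (e2_nonneg _)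
    (hD j) (hD k)

end

-- The sums in the statement are `a ⬝ᵥ v` and `a ᵥ* u` unfolded.
theorem stmt_9_general {n : ℕ} (v : Fin n → ℝ) (hv : e2 v = 1) :
    -- main claim: any family of unit vectors annihilating all unit vectors orthogonal
    -- to v forces |v_j| = n^{-1/2} for every j
    (∀ u : Fin n → (Fin n → ℝ), (∀ j, e2 (u j) = 1) →
      (∀ a : Fin n → ℝ, e2 a = 1 → (∑ j, a j * v j) = 0 →
        ∀ k, (∑ j, a j * u j k) = 0) →
      ∀ j, |v j| = 1 / Real.sqrt n) ∧
    -- in particular, if the coordinates of v do not all have equal magnitude, then the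
    -- vector discrepancy of the family S^{n-1} ∩ v^⊥ is strictly positive ...
    ((∃ j k : Fin n, |v j| ≠ |v k|) →
      0 < sInf { d | ∃ u : Fin n → (Fin n → ℝ), (∀ j, e2 (u j) = 1) ∧
        d = ⨆ a : { a : Fin n → ℝ // e2 a = 1 ∧ (∑ j, a j * v j) = 0 },
              e2 (fun k => ∑ j, a.1 j * u j k) }) ∧
    -- ... while its spherical discrepancy is zero, witnessed by x = √n · v
    (e2 (Real.sqrt n • v) = Real.sqrt n ∧
      ∀ a : Fin n → ℝ, e2 a = 1 → (∑ j, a j * v j) = 0 →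
        |∑ j, a j * (Real.sqrt n • v) j| = 0) := by
  refine ⟨fun u hu h => abs_eq_one_div_sqrt_of_vecMul_eq_zero hv hu
    fun a ha hav => funext (h a ha hav), ?_, ?_, ?_⟩
  · rintro ⟨j, k, hjk⟩
    have hδ : 0 < |(|v j| - |v k|)| := abs_pos.mpr (sub_ne_zero.mpr hjk)
    refine (div_pos hδ (add_pos hδ two_pos)).trans_le (le_csInf ?_ ?_)
    · exact ⟨_, fun _ => Pi.single j 1, fun _ => e2_single_one j, rfl⟩
    · rintro _ ⟨u, hu, rfl⟩
      exact div_add_two_le_iSup_e2_vecMul hv hu j k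
  · rw [e2_smul, hv, mul_one, abs_of_nonneg (Real.sqrt_nonneg _)]
  · intro a _ hav
    change |a ⬝ᵥ (√n • v)| = 0
    rw [dotProduct_smul, show a ⬝ᵥ v = 0 from hav, smul_zero, abs_zero]

theorem stmt_9 {n : ℕ} (hn : 2 ≤ n) (v : Fin n → ℝ) (hv : e2 v = 1) :
    -- main claim: any family of unit vectors annihilating all unit vectors orthogonal
    -- to v forces |v_j| = n^{-1/2} for every j
    (∀ u : Fin n → (Fin n → ℝ), (∀ j, e2 (u j) = 1) →
      (∀ a : Fin n → ℝ, e2 a = 1 → (∑ j, a j * v j) = 0 →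
        ∀ k, (∑ j, a j * u j k) = 0) →
      ∀ j, |v j| = 1 / Real.sqrt n) ∧
    -- in particular, if the coordinates of v do not all have equal magnitude, then the
    -- vector discrepancy of the family S^{n-1} ∩ v^⊥ is strictly positive ...
    ((∃ j k : Fin n, |v j| ≠ |v k|) →
      0 < sInf { d | ∃ u : Fin n → (Fin n → ℝ), (∀ j, e2 (u j) = 1) ∧
        d = ⨆ a : { a : Fin n → ℝ // e2 a = 1 ∧ (∑ j, a j * v j) = 0 },
              e2 (fun k => ∑ j, a.1 j * u j k) }) ∧
    -- ... while its spherical discrepancy is zero, witnessed by x = √n · v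
    (e2 (Real.sqrt n • v) = Real.sqrt n ∧
      ∀ a : Fin n → ℝ, e2 a = 1 → (∑ j, a j * v j) = 0 →
        |∑ j, a j * (Real.sqrt n • v) j| = 0) :=
  stmt_9_general v hv
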